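/- arXiv:1605.05051 — 6 statements merged into one kernel-verified Lean document; each statement's English description precedes it below -/
import Mathlib

section
/- For all nonnegative reals a and b, 0 ≤ √((a+b)/2) − (√a + √b)/2 ≤ ((√2 − 1)/2)·|√a − √b|. -/
/-!
Put `s = √a + √b` and `d = |√a - √b|`, so that `0 ≤ d ≤ s` and `√((a + b) / 2) = √(s² + d²) / 2`.
The claim becomes `s ≤ √(s² + d²) ≤ s + (√2 - 1) d`. The upper bound is the chord of the convex
function `d ↦ √(s² + d²)` on `[0, s]`: squared, it reduces to `2 (√2 - 1) d (s - d) ≥ 0`.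
-/

open Real

lemma sqrt_sq_add_sq_le_add_mul {s d : ℝ} (hd : 0 ≤ d) (hds : d ≤ s) :
    √(s ^ 2 + d ^ 2) ≤ s + (√2 - 1) * d := by
  have hsqrt2 : √2 ^ 2 = 2 := sq_sqrt (by norm_num)
  have hone : 1 ≤ √2 := one_le_sqrt.mpr (by norm_num)
  have hgap : (s + (√2 - 1) * d) ^ 2 - (s ^ 2 + d ^ 2) = 2 * (√2 - 1) * d * (s - d) := by
    linear_combination d ^ 2 * hsqrt2
  have hgap_nonneg : 0 ≤ 2 * (√2 - 1) * d * (s - d) := by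
    have : 0 ≤ √2 - 1 := by linarith
    have : 0 ≤ s - d := by linarith
    positivity
  rw [sqrt_le_left (by nlinarith)]
  linarith

lemma sqrt_add_div_two_eq {a b : ℝ} (ha : 0 ≤ a) (hb : 0 ≤ b) :
    √((a + b) / 2) = √((√a + √b) ^ 2 + |√a - √b| ^ 2) / 2 := by
  have hsum : (a + b) / 2 = ((√a + √b) ^ 2 + |√a - √b| ^ 2) / 2 ^ 2 := by
    rw [sq_abs]
    linear_combination (-(sq_sqrt ha) - sq_sqrt hb) / 2
  rw [hsum, sqrt_div' _ (by positivity), sqrt_sq (by norm_num)]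

theorem stmt0 (a b : ℝ) (ha : 0 ≤ a) (hb : 0 ≤ b) :
    0 ≤ Real.sqrt ((a + b) / 2) - (Real.sqrt a + Real.sqrt b) / 2 ∧
    Real.sqrt ((a + b) / 2) - (Real.sqrt a + Real.sqrt b) / 2
      ≤ ((Real.sqrt 2 - 1) / 2) * |Real.sqrt a - Real.sqrt b| := by
  rw [sqrt_add_div_two_eq ha hb]
  set s := √a + √b
  set d := |√a - √b|
  have hd : 0 ≤ d := abs_nonneg _
  have hds : d ≤ s := abs_le.mpr ⟨by linarith [sqrt_nonneg a], by linarith [sqrt_nonneg b]⟩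
  have hlower : s ≤ √(s ^ 2 + d ^ 2) := le_sqrt_of_sq_le (by nlinarith)
  have hupper := sqrt_sq_add_sq_le_add_mul hd hds
  constructor <;> linarith
end

section
/- The function u ↦ ψ₂(√u) = (√u − 1)/(√u + 1) is strictly concave on (0,∞). -/
/-!
Write `ψ y = (y - 1) / (y + 1)`. On `(-1, ∞)` the map `ψ` is strictly increasing and strictly
concave, since `ψ y = 1 - 2 / (y + 1)`. The square root is strictly concave and injective on
`(0, ∞)`, so the composite `ψ ∘ √` is strictly concave there.
-/

open Real Set

lemma strictMonoOn_sub_one_div_add_one :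
    StrictMonoOn (fun y : ℝ => (y - 1) / (y + 1)) (Ioi (-1)) := by
  intro x (hx : -1 < x) y (hy : -1 < y) hxy
  rw [div_lt_div_iff₀ (by linarith) (by linarith)]
  linarith

lemma strictConcaveOn_sub_one_div_add_one :
    StrictConcaveOn ℝ (Ioi (-1)) (fun y : ℝ => (y - 1) / (y + 1)) := by
  refine ⟨convex_Ioi _, fun x (hx : -1 < x) y (hy : -1 < y) hxy a b ha hb hab => ?_⟩
  have hx' : 0 < x + 1 := by linarith
  have hy' : 0 < y + 1 := by linarith
  have hxy' : 0 < (x - y) ^ 2 := by positivity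
  obtain rfl : b = 1 - a := by linarith
  simp only [smul_eq_mul]
  rw [← sub_pos]
  have key : (a * x + (1 - a) * y - 1) / (a * x + (1 - a) * y + 1)
      - (a * ((x - 1) / (x + 1)) + (1 - a) * ((y - 1) / (y + 1)))
      = 2 * a * (1 - a) * (x - y) ^ 2 / ((x + 1) * (y + 1) * (a * x + (1 - a) * y + 1)) := by
    have : a * x + (1 - a) * y + 1 ≠ 0 := by nlinarith
    field_simp
    ring
  rw [key]
  have : 0 < a * x + (1 - a) * y + 1 := by nlinarith
  positivity

lemma Real.sqrt_image_Ioi_zero : sqrt '' Ioi 0 = Ioi 0 := by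
  ext y
  constructor
  · rintro ⟨x, hx, rfl⟩
    exact sqrt_pos.2 hx
  · intro (hy : 0 < y)
    exact ⟨y ^ 2, pow_pos hy 2, sqrt_sq hy.le⟩

theorem stmt4 :
    StrictConcaveOn ℝ (Set.Ioi (0 : ℝ))
      (fun u => (Real.sqrt u - 1) / (Real.sqrt u + 1)) := by
  have hsub : Ioi (0 : ℝ) ⊆ Ioi (-1) := Ioi_subset_Ioi (by norm_num)
  have hsqrt : StrictConcaveOn ℝ (Ioi 0) sqrt :=
    strictConcaveOn_sqrt.subset Ioi_subset_Ici_self (convex_Ioi 0)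
  have hinj : InjOn sqrt (Ioi 0) := strictMonoOn_sqrt.injOn.mono Ioi_subset_Ici_self
  have hψ : StrictConcaveOn ℝ (sqrt '' Ioi 0) (fun y : ℝ => (y - 1) / (y + 1)) := by
    rw [sqrt_image_Ioi_zero]
    exact strictConcaveOn_sub_one_div_add_one.subset hsub (convex_Ioi 0)
  have hψ_mono : StrictMonoOn (fun y : ℝ => (y - 1) / (y + 1)) (sqrt '' Ioi 0) := by
    rw [sqrt_image_Ioi_zero]
    exact strictMonoOn_sub_one_div_add_one.mono hsub
  exact hψ.comp hsqrt hψ_mono hinj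
end

section
/- Let R and Q be probability measures on a measurable space, with Q = q·μ absolutely continuous with respect to μ. Decompose R = δ²·R' + (1−δ²)·R'' where R' ≪ μ, R'' ⊥ μ, and δ ∈ [0,1]. Then the Hellinger affinity satisfies ρ(R,Q) = δ·ρ(R',Q), and consequently δ·h²(R',Q) = δ − (1 − h²(R,Q)) ≥ 0. -/
open MeasureTheory
open scoped ENNReal

/-- The squared Hellinger distance between two finite measures. -/
noncomputable def hellingerSq {α : Type*} [MeasurableSpace α] (P Q : Measure α) : ℝ :=
  (1 / 2) * ∫ x, (Real.sqrt ((P.rnDeriv (P + Q)) x).toReal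
      - Real.sqrt ((Q.rnDeriv (P + Q)) x).toReal) ^ 2 ∂(P + Q)

/-- The Hellinger affinity between two finite measures. -/
noncomputable def hellAff {α : Type*} [MeasurableSpace α] (P Q : Measure α) : ℝ :=
  ∫ x, Real.sqrt (((P.rnDeriv (P + Q)) x).toReal * ((Q.rnDeriv (P + Q)) x).toReal) ∂(P + Q)

/-! Against any measure `ν` dominating `P` and `Q`, the affinity is `∫ √(dP/dν · dQ/dν) dν`, and
this does not depend on the choice of `ν`; take `ν = R' + R'' + Q`. Since `R'' ⟂ Q`, the product
of the densities of `R''` and `Q` vanishes `ν`-a.e., so `R''` drops out of the integral, and the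
weight `δ²` of `R'` leaves the square root as `δ`. The second claim then follows from
`h² = 1 - ρ` for probability measures. -/

namespace ENNReal

lemma mul_self_rpow_half (x : ℝ≥0∞) : (x * x) ^ (1 / 2 : ℝ) = x := by
  rw [← sq, ← rpow_natCast x 2, ← rpow_mul]
  norm_num

lemma ofReal_sq_rpow_half {δ : ℝ} (hδ : 0 ≤ δ) :
    ENNReal.ofReal (δ ^ 2) ^ (1 / 2 : ℝ) = ENNReal.ofReal δ := by
  rw [sq, ofReal_mul hδ, mul_self_rpow_half]

end ENNReal

namespace Real

lemma sqrt_mul_le_add {a b : ℝ} (ha : 0 ≤ a) (hb : 0 ≤ b) : √(a * b) ≤ a + b := by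
  rw [sqrt_le_iff]
  constructor <;> nlinarith

lemma sqrt_sub_sqrt_sq {a b : ℝ} (ha : 0 ≤ a) (hb : 0 ≤ b) :
    (√a - √b) ^ 2 = a + b - 2 * √(a * b) := by
  rw [sub_sq, sq_sqrt ha, sq_sqrt hb, sqrt_mul ha]
  ring

end Real

namespace MeasureTheory.Measure

variable {α : Type*} [MeasurableSpace α]

lemma isProbabilityMeasure_ofReal_smul_add (P Q : Measure α) [IsProbabilityMeasure P]
    [IsProbabilityMeasure Q] {t : ℝ} (ht0 : 0 ≤ t) (ht1 : t ≤ 1) :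
    IsProbabilityMeasure (ENNReal.ofReal t • P + ENNReal.ofReal (1 - t) • Q) := by
  constructor
  simp only [add_apply, smul_apply, measure_univ, smul_eq_mul, mul_one]
  rw [← ENNReal.ofReal_add ht0 (by linarith)]
  simp

lemma rnDeriv_eq_zero_ae_of_measure_eq_zero (P ν : Measure α) {s : Set α} (hs : MeasurableSet s)
    (hPs : P s = 0) : ∀ᵐ x ∂ν, x ∈ s → P.rnDeriv ν x = 0 := by
  have h : ∫⁻ x in s, P.rnDeriv ν x ∂ν = 0 :=
    le_antisymm ((setLIntegral_rnDeriv_le s).trans hPs.le) zero_le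
  rw [lintegral_eq_zero_iff (measurable_rnDeriv _ _)] at h
  exact (ae_restrict_iff' hs).mp h

lemma rnDeriv_mul_rnDeriv_eq_zero_of_mutuallySingular {P Q : Measure α} (h : P ⟂ₘ Q)
    (ν : Measure α) : P.rnDeriv ν * Q.rnDeriv ν =ᵐ[ν] 0 := by
  filter_upwards [rnDeriv_eq_zero_ae_of_measure_eq_zero P ν h.measurableSet_nullSet
      h.measure_nullSet, rnDeriv_eq_zero_ae_of_measure_eq_zero Q ν
      h.measurableSet_nullSet.compl h.measure_compl_nullSet] with x hP hQ
  by_cases hx : x ∈ h.nullSet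
  · simp [hP hx]
  · simp [hQ hx]

end MeasureTheory.Measure

namespace Hellinger

variable {α : Type*} [MeasurableSpace α]

noncomputable def affinity (P Q ν : Measure α) : ℝ≥0∞ :=
  ∫⁻ x, (P.rnDeriv ν x * Q.rnDeriv ν x) ^ (1 / 2 : ℝ) ∂ν

lemma measurable_affinity_integrand (P Q ν : Measure α) :
    Measurable fun x ↦ (P.rnDeriv ν x * Q.rnDeriv ν x) ^ (1 / 2 : ℝ) :=
  ((Measure.measurable_rnDeriv _ _).mul (Measure.measurable_rnDeriv _ _)).pow_const _

lemma affinity_eq_of_absolutelyContinuous {P Q ν₁ ν₂ : Measure α} [SigmaFinite P]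
    [SigmaFinite Q] [SigmaFinite ν₁] [SigmaFinite ν₂] (hP : P ≪ ν₁) (hQ : Q ≪ ν₁)
    (hν : ν₁ ≪ ν₂) : affinity P Q ν₁ = affinity P Q ν₂ := by
  rw [affinity, affinity, ← lintegral_rnDeriv_mul hν
    (measurable_affinity_integrand P Q ν₁).aemeasurable]
  refine lintegral_congr_ae ?_
  filter_upwards [Measure.rnDeriv_mul_rnDeriv (κ := ν₂) hP,
    Measure.rnDeriv_mul_rnDeriv (κ := ν₂) hQ] with x hPx hQx
  simp only [Pi.mul_apply] at hPx hQx
  rw [← hPx, ← hQx, mul_mul_mul_comm,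
    ENNReal.mul_rpow_of_nonneg _ (ν₁.rnDeriv ν₂ x * _) (by norm_num),
    ENNReal.mul_self_rpow_half, mul_comm]

lemma affinity_smul_left (P Q ν : Measure α) [SigmaFinite P] [SigmaFinite ν] {c : ℝ≥0∞}
    (hc : c ≠ ∞) : affinity (c • P) Q ν = c ^ (1 / 2 : ℝ) * affinity P Q ν := by
  rw [affinity, affinity, ← lintegral_const_mul _ (measurable_affinity_integrand P Q ν)]
  refine lintegral_congr_ae ?_
  filter_upwards [Measure.rnDeriv_smul_left_of_ne_top' P ν hc] with x hx
  rw [hx, Pi.smul_apply, smul_eq_mul, mul_assoc, ENNReal.mul_rpow_of_nonneg _ _ (by norm_num)]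

lemma affinity_add_left_of_mutuallySingular {P R Q : Measure α} [SigmaFinite P] [SigmaFinite R]
    (ν : Measure α) [SigmaFinite ν] (h : R ⟂ₘ Q) :
    affinity (P + R) Q ν = affinity P Q ν := by
  refine lintegral_congr_ae ?_
  filter_upwards [Measure.rnDeriv_add' P R ν,
    Measure.rnDeriv_mul_rnDeriv_eq_zero_of_mutuallySingular h ν] with x hadd hzero
  simp only [Pi.mul_apply, Pi.zero_apply] at hzero
  rw [hadd, Pi.add_apply, add_mul, hzero, add_zero]

lemma hellAff_eq_toReal_affinity_add (P Q : Measure α) [SigmaFinite P] [SigmaFinite Q] :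
    hellAff P Q = (affinity P Q (P + Q)).toReal := by
  have hfin : ∀ᵐ x ∂(P + Q), P.rnDeriv (P + Q) x < ∞ ∧ Q.rnDeriv (P + Q) x < ∞ :=
    (Measure.rnDeriv_lt_top P (P + Q)).and (Measure.rnDeriv_lt_top Q (P + Q))
  rw [hellAff, affinity, ← integral_toReal (measurable_affinity_integrand P Q _).aemeasurable]
  · refine integral_congr_ae ?_
    filter_upwards [hfin] with x _
    rw [← ENNReal.toReal_rpow, ENNReal.toReal_mul, Real.sqrt_eq_rpow]
  · filter_upwards [hfin] with x ⟨hP, hQ⟩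
    exact ENNReal.rpow_lt_top_of_nonneg (by norm_num) (ENNReal.mul_ne_top hP.ne hQ.ne)

lemma hellAff_eq_toReal_affinity {P Q ν : Measure α} [SigmaFinite P] [SigmaFinite Q]
    [SigmaFinite ν] (hP : P ≪ ν) (hQ : Q ≪ ν) : hellAff P Q = (affinity P Q ν).toReal := by
  rw [hellAff_eq_toReal_affinity_add, affinity_eq_of_absolutelyContinuous
    (Measure.AbsolutelyContinuous.rfl.add_right Q) (Measure.AbsolutelyContinuous.rfl.add_right' P)
    (hP.add_left hQ)]

lemma hellingerSq_eq_one_sub_hellAff (P Q : Measure α) [IsProbabilityMeasure P]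
    [IsProbabilityMeasure Q] : hellingerSq P Q = 1 - hellAff P Q := by
  set p : α → ℝ := fun x ↦ (P.rnDeriv (P + Q) x).toReal with hp_def
  set q : α → ℝ := fun x ↦ (Q.rnDeriv (P + Q) x).toReal with hq_def
  have hp : Integrable p (P + Q) := Measure.integrable_toReal_rnDeriv
  have hq : Integrable q (P + Q) := Measure.integrable_toReal_rnDeriv
  have hp_one : ∫ x, p x ∂(P + Q) = 1 := by
    rw [hp_def, Measure.integral_toReal_rnDeriv (Measure.AbsolutelyContinuous.rfl.add_right Q)]
    simp
  have hq_one : ∫ x, q x ∂(P + Q) = 1 := by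
    rw [hq_def, Measure.integral_toReal_rnDeriv (Measure.AbsolutelyContinuous.rfl.add_right' P)]
    simp
  have hpq : Integrable (fun x ↦ p x + q x) (P + Q) := hp.add hq
  have hsqrt : Integrable (fun x ↦ √(p x * q x)) (P + Q) := by
    refine hpq.mono (Measurable.aestronglyMeasurable ?_) (ae_of_all _ fun x ↦ ?_)
    · exact Real.continuous_sqrt.measurable.comp
        ((Measure.measurable_rnDeriv _ _).ennreal_toReal.mul
          (Measure.measurable_rnDeriv _ _).ennreal_toReal)
    · have hpx : 0 ≤ p x := ENNReal.toReal_nonneg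
      have hqx : 0 ≤ q x := ENNReal.toReal_nonneg
      rw [Real.norm_of_nonneg (Real.sqrt_nonneg _), Real.norm_of_nonneg (add_nonneg hpx hqx)]
      exact Real.sqrt_mul_le_add hpx hqx
  calc hellingerSq P Q = 1 / 2 * ∫ x, (p x + q x - 2 * √(p x * q x)) ∂(P + Q) := by
        simp only [hellingerSq, ← Real.sqrt_sub_sqrt_sq ENNReal.toReal_nonneg
          ENNReal.toReal_nonneg, p, q]
    _ = 1 - hellAff P Q := by
        rw [integral_sub hpq (hsqrt.const_mul 2), integral_add hp hq,
          integral_const_mul, hp_one, hq_one, hellAff]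
        ring

lemma hellingerSq_nonneg (P Q : Measure α) : 0 ≤ hellingerSq P Q :=
  mul_nonneg (by norm_num) (integral_nonneg fun _ ↦ sq_nonneg _)

end Hellinger

open Hellinger in
theorem stmt7_general {α : Type*} [MeasurableSpace α] (μ : Measure α)
    (q : α → ℝ≥0∞) [IsProbabilityMeasure (μ.withDensity q)]
    (R' R'' : Measure α) [IsProbabilityMeasure R'] [IsProbabilityMeasure R'']
    (hsing : R''.MutuallySingular μ)
    (δ : ℝ) (hδ0 : 0 ≤ δ) (hδ1 : δ ≤ 1) :
    hellAff (ENNReal.ofReal (δ ^ 2) • R' + ENNReal.ofReal (1 - δ ^ 2) • R'') (μ.withDensity q)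
        = δ * hellAff R' (μ.withDensity q) ∧
    δ * hellingerSq R' (μ.withDensity q)
        = δ - (1 - hellingerSq (ENNReal.ofReal (δ ^ 2) • R' + ENNReal.ofReal (1 - δ ^ 2) • R'')
            (μ.withDensity q)) ∧
    0 ≤ δ - (1 - hellingerSq (ENNReal.ofReal (δ ^ 2) • R' + ENNReal.ofReal (1 - δ ^ 2) • R'')
            (μ.withDensity q)) := by
  set Q := μ.withDensity q
  set R := ENNReal.ofReal (δ ^ 2) • R' + ENNReal.ofReal (1 - δ ^ 2) • R''
  have := R'.smul_finite (ENNReal.ofReal_ne_top (r := δ ^ 2))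
  have := R''.smul_finite (ENNReal.ofReal_ne_top (r := 1 - δ ^ 2))
  have := Measure.isProbabilityMeasure_ofReal_smul_add R' R'' (sq_nonneg δ) (by nlinarith)
  have hsingQ : R'' ⟂ₘ Q := hsing.mono_ac .rfl (withDensity_absolutelyContinuous μ q)
  set ν := R' + R'' + Q
  have hR'ν : R' ≪ ν := (Measure.AbsolutelyContinuous.rfl.add_right R'').add_right Q
  have hR''ν : R'' ≪ ν := (Measure.AbsolutelyContinuous.rfl.add_right' R').add_right Q
  have hRν : R ≪ ν := (hR'ν.smul_left _).add_left (hR''ν.smul_left _)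
  have hQν : Q ≪ ν := Measure.AbsolutelyContinuous.rfl.add_right' _
  have hAff : hellAff R Q = δ * hellAff R' Q := by
    rw [hellAff_eq_toReal_affinity hRν hQν, hellAff_eq_toReal_affinity hR'ν hQν,
      affinity_add_left_of_mutuallySingular ν (hsingQ.smul _),
      affinity_smul_left _ _ _ ENNReal.ofReal_ne_top, ENNReal.ofReal_sq_rpow_half hδ0,
      ENNReal.toReal_mul, ENNReal.toReal_ofReal hδ0]
  have hSq : δ * hellingerSq R' Q = δ - (1 - hellingerSq R Q) := by
    rw [hellingerSq_eq_one_sub_hellAff, hellingerSq_eq_one_sub_hellAff, hAff]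
    ring
  exact ⟨hAff, hSq, hSq ▸ mul_nonneg hδ0 (hellingerSq_nonneg R' Q)⟩

theorem stmt7 {α : Type*} [MeasurableSpace α] (μ : Measure α) [SigmaFinite μ]
    (q : α → ℝ≥0∞) (hq : Measurable q) [IsProbabilityMeasure (μ.withDensity q)]
    (R' R'' : Measure α) [IsProbabilityMeasure R'] [IsProbabilityMeasure R'']
    (hac : R' ≪ μ) (hsing : R''.MutuallySingular μ)
    (δ : ℝ) (hδ0 : 0 ≤ δ) (hδ1 : δ ≤ 1) :
    hellAff (ENNReal.ofReal (δ ^ 2) • R' + ENNReal.ofReal (1 - δ ^ 2) • R'') (μ.withDensity q)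
        = δ * hellAff R' (μ.withDensity q) ∧
    δ * hellingerSq R' (μ.withDensity q)
        = δ - (1 - hellingerSq (ENNReal.ofReal (δ ^ 2) • R' + ENNReal.ofReal (1 - δ ^ 2) • R'')
            (μ.withDensity q)) ∧
    0 ≤ δ - (1 - hellingerSq (ENNReal.ofReal (δ ^ 2) • R' + ENNReal.ofReal (1 - δ ^ 2) • R'')
            (μ.withDensity q)) :=
  stmt7_general μ q R' R'' hsing δ hδ0 hδ1
end

section
/- Let ψ : [0,∞] → [−1,1] satisfy ψ(1/x) = −ψ(x) for all x ∈ [0,∞) (with convention 1/0 = +∞), and suppose |ψ(x)| ≤ L|x−1| for all x ≥ 0 and some constant L > 0. Then for any probability measures R, Q = q·μ, Q' = q'·μ on a measurable space, ∫ ψ²(√(q'/q)) dR ≤ (2L+1)² [h²(R,Q) + h²(R,Q')]. -/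
/-
Write `d = √(dR/dν)`, `a = √(dQ/dν)`, `b = √(dQ'/dν)` and `t = ψ(√(q'/q))` for a dominating
`ν`, so that `√(q'/q) = b / a`. The Lipschitz bound at `b / a`, and (through `ψ(1/x) = -ψ(x)`)
at `a / b`, give `|t| a ≤ L |b - a|` and `|t| b ≤ L |a - b|`. Writing `d = (d - a) + a` and using
`|t| ≤ 1` and the triangle inequality yields `|t| d ≤ (L + 1/2) (|d - a| + |d - b|)`; squaring
and integrating against `ν` gives the bound.
-/

open MeasureTheory
open scoped ENNReal

/-- `ratio q q' x` is `q' x / q x` with the conventions `0/0 = 1` and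
`a/0 = +∞` for `a > 0` (the latter being the `ℝ≥0∞` division). -/
noncomputable def ratio {β : Type*} (q q' : β → ℝ≥0∞) (x : β) : ℝ≥0∞ :=
  if q x = 0 ∧ q' x = 0 then 1 else q' x / q x

lemma sq_mul_sq_le_of_abs_mul_le {t a b d L : ℝ} (hL : 0 ≤ L) (hd : 0 ≤ d) (ht : |t| ≤ 1)
    (ha : |t| * a ≤ L * |b - a|) (hb : |t| * b ≤ L * |a - b|) :
    t ^ 2 * d ^ 2 ≤ (2 * L + 1) ^ 2 / 2 * ((d - a) ^ 2 + (d - b) ^ 2) := by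
  have split : ∀ c, |t| * d ≤ |d - c| + |t| * c := fun c =>
    calc |t| * d = |t| * (d - c) + |t| * c := by ring
      _ ≤ |d - c| + |t| * c := by
        gcongr
        exact (mul_le_mul_of_nonneg_left (le_abs_self _) (abs_nonneg t)).trans
          (mul_le_of_le_one_left (abs_nonneg _) ht)
  have hab : L * |b - a| ≤ L * (|d - a| + |d - b|) := by
    gcongr
    linarith [abs_sub_le b d a, abs_sub_comm b d]
  have key : |t| * d ≤ (L + 1 / 2) * (|d - a| + |d - b|) := by
    rw [abs_sub_comm a b] at hb
    linarith [split a, split b]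
  calc t ^ 2 * d ^ 2 = (|t| * d) ^ 2 := by rw [mul_pow, sq_abs]
    _ ≤ ((L + 1 / 2) * (|d - a| + |d - b|)) ^ 2 := pow_le_pow_left₀ (by positivity) key 2
    _ ≤ (2 * L + 1) ^ 2 / 2 * ((d - a) ^ 2 + (d - b) ^ 2) := by
      rw [← sq_abs (d - a), ← sq_abs (d - b)]
      nlinarith [mul_nonneg (sq_nonneg (L + 1 / 2)) (sq_nonneg (|d - a| - |d - b|))]

section Ratio

variable {β : Type*} {q q' : β → ℝ≥0∞} {x : β} {ψ : ℝ≥0∞ → ℝ} {L : ℝ}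

lemma ratio_swap (hq : q x ≠ ⊤) : ratio q' q x = (ratio q q' x)⁻¹ := by
  unfold ratio
  by_cases h : q x = 0 ∧ q' x = 0
  · rw [if_pos h.symm, if_pos h, inv_one]
  · rw [if_neg (mt And.symm h), if_neg h]
    exact (ENNReal.inv_div (Or.inl hq) (not_and_or.mp h)).symm

lemma abs_apply_inv_eq (hanti : ∀ x : ℝ≥0∞, x ≠ ⊤ → ψ x⁻¹ = -ψ x) (y : ℝ≥0∞) :
    |ψ y⁻¹| = |ψ y| := by
  rcases eq_or_ne y ⊤ with rfl | hy
  · rw [ENNReal.inv_top, ← ENNReal.inv_zero, hanti 0 ENNReal.zero_ne_top, abs_neg]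
  · rw [hanti y hy, abs_neg]

lemma abs_apply_ratio_rpow_mul_sqrt_le (hlip : ∀ x : ℝ≥0∞, x ≠ ⊤ → |ψ x| ≤ L * |x.toReal - 1|)
    (hL : 0 ≤ L) (hq' : q' x ≠ ⊤) :
    |ψ (ratio q q' x ^ (1 / 2 : ℝ))| * √(q x).toReal
      ≤ L * |√(q' x).toReal - √(q x).toReal| := by
  rcases (ENNReal.toReal_nonneg (a := q x)).eq_or_lt with h0 | hpos
  · rw [← h0, Real.sqrt_zero, mul_zero]
    positivity
  obtain ⟨hq0, hqtop⟩ := ENNReal.toReal_pos_iff.mp hpos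
  have hratio : ratio q q' x = q' x / q x := if_neg fun h => hq0.ne' h.1
  have hfin : ratio q q' x ^ (1 / 2 : ℝ) ≠ ⊤ := by
    rw [hratio]
    exact ENNReal.rpow_ne_top_of_nonneg (by norm_num) (ENNReal.div_ne_top hq' hq0.ne')
  have hsqrt : (ratio q q' x ^ (1 / 2 : ℝ)).toReal = √(q' x).toReal / √(q x).toReal := by
    rw [hratio, ← ENNReal.toReal_rpow, ENNReal.toReal_div, ← Real.sqrt_eq_rpow,
      Real.sqrt_div' _ ENNReal.toReal_nonneg]
  have hsq : 0 < √(q x).toReal := Real.sqrt_pos.mpr hpos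
  calc |ψ (ratio q q' x ^ (1 / 2 : ℝ))| * √(q x).toReal
      ≤ L * |√(q' x).toReal / √(q x).toReal - 1| * √(q x).toReal := by
        gcongr
        exact hsqrt ▸ hlip _ hfin
    _ = L * (|(√(q' x).toReal - √(q x).toReal) / √(q x).toReal| * √(q x).toReal) := by
        rw [sub_div, div_self hsq.ne', mul_assoc]
    _ = L * |√(q' x).toReal - √(q x).toReal| := by
        rw [abs_div, abs_of_pos hsq, div_mul_cancel₀ _ hsq.ne']

lemma abs_apply_ratio_rpow_mul_sqrt_le' (hanti : ∀ x : ℝ≥0∞, x ≠ ⊤ → ψ x⁻¹ = -ψ x)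
    (hlip : ∀ x : ℝ≥0∞, x ≠ ⊤ → |ψ x| ≤ L * |x.toReal - 1|) (hL : 0 ≤ L)
    (hq : q x ≠ ⊤) :
    |ψ (ratio q q' x ^ (1 / 2 : ℝ))| * √(q' x).toReal
      ≤ L * |√(q x).toReal - √(q' x).toReal| := by
  have h := abs_apply_ratio_rpow_mul_sqrt_le (q := q') (q' := q) hlip hL hq
  rwa [ratio_swap hq, ENNReal.inv_rpow, abs_apply_inv_eq hanti] at h

lemma sq_apply_ratio_rpow_mul_le (hψb : ∀ x, |ψ x| ≤ 1)
    (hanti : ∀ x : ℝ≥0∞, x ≠ ⊤ → ψ x⁻¹ = -ψ x)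
    (hlip : ∀ x : ℝ≥0∞, x ≠ ⊤ → |ψ x| ≤ L * |x.toReal - 1|) (hL : 0 ≤ L)
    (hq : q x ≠ ⊤) (hq' : q' x ≠ ⊤) (r w : ℝ≥0∞) :
    ψ (ratio q q' x ^ (1 / 2 : ℝ)) ^ 2 * r.toReal
      ≤ (2 * L + 1) ^ 2 / 2 * ((√r.toReal - √(q x * w).toReal) ^ 2
        + (√r.toReal - √(q' x * w).toReal) ^ 2) := by
  set t := ψ (ratio q q' x ^ (1 / 2 : ℝ))
  have hw : 0 ≤ √w.toReal := Real.sqrt_nonneg _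
  have scale : ∀ a b : ℝ, |t| * a ≤ L * |b - a| →
      |t| * (a * √w.toReal) ≤ L * |b * √w.toReal - a * √w.toReal| :=
    fun a b h => by
      rw [← sub_mul, abs_mul, abs_of_nonneg hw, ← mul_assoc, ← mul_assoc]
      exact mul_le_mul_of_nonneg_right h hw
  simp only [ENNReal.toReal_mul, Real.sqrt_mul ENNReal.toReal_nonneg]
  calc t ^ 2 * r.toReal = t ^ 2 * √r.toReal ^ 2 := by rw [Real.sq_sqrt ENNReal.toReal_nonneg]
    _ ≤ _ := sq_mul_sq_le_of_abs_mul_le hL (Real.sqrt_nonneg _) (hψb _)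
        (scale _ _ (abs_apply_ratio_rpow_mul_sqrt_le hlip hL hq'))
        (scale _ _ (abs_apply_ratio_rpow_mul_sqrt_le' hanti hlip hL hq))

end Ratio

section Hellinger

variable {α : Type*} [MeasurableSpace α]

lemma integrable_sqrt_rnDeriv_sub_sq (P Q ν : Measure α) [IsFiniteMeasure P] [IsFiniteMeasure Q] :
    Integrable (fun x ↦ (√(P.rnDeriv ν x).toReal - √(Q.rnDeriv ν x).toReal) ^ 2) ν := by
  refine ((Measure.integrable_toReal_rnDeriv (μ := P) (ν := ν)).add
    (Measure.integrable_toReal_rnDeriv (μ := Q))).mono'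
    (by fun_prop) (ae_of_all _ fun x ↦ ?_)
  have hp := Real.sq_sqrt (ENNReal.toReal_nonneg (a := P.rnDeriv ν x))
  have hq := Real.sq_sqrt (ENNReal.toReal_nonneg (a := Q.rnDeriv ν x))
  rw [Real.norm_of_nonneg (sq_nonneg _), Pi.add_apply, sub_sq, hp, hq]
  nlinarith [mul_nonneg (Real.sqrt_nonneg (P.rnDeriv ν x).toReal)
    (Real.sqrt_nonneg (Q.rnDeriv ν x).toReal)]

lemma hellingerSq_eq_integral_rnDeriv {P Q ν : Measure α} [IsFiniteMeasure P] [IsFiniteMeasure Q]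
    [SigmaFinite ν] (hP : P ≪ ν) (hQ : Q ≪ ν) :
    hellingerSq P Q
      = 1 / 2 * ∫ x, (√(P.rnDeriv ν x).toReal - √(Q.rnDeriv ν x).toReal) ^ 2 ∂ν := by
  unfold hellingerSq
  congr 1
  rw [← integral_rnDeriv_smul (hP.add_left hQ) (f := fun x ↦
    (√((P.rnDeriv (P + Q)) x).toReal - √((Q.rnDeriv (P + Q)) x).toReal) ^ 2)]
  refine integral_congr_ae ?_
  have hPm : P ≪ P + Q := Measure.AbsolutelyContinuous.rfl.add_right Q
  have hQm : Q ≪ P + Q := Measure.AbsolutelyContinuous.rfl.add_right' P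
  filter_upwards [Measure.rnDeriv_mul_rnDeriv (κ := ν) hPm,
    Measure.rnDeriv_mul_rnDeriv (κ := ν) hQm]
    with x hPx hQx
  rw [← hPx, ← hQx]
  simp only [Pi.mul_apply, ENNReal.toReal_mul, Real.sqrt_mul ENNReal.toReal_nonneg, smul_eq_mul]
  rw [← sub_mul, mul_pow, Real.sq_sqrt ENNReal.toReal_nonneg, mul_comm]

end Hellinger

theorem stmt8_general {α : Type*} [MeasurableSpace α] (μ : Measure α) [SigmaFinite μ]
    (R : Measure α) [IsProbabilityMeasure R]
    (q q' : α → ℝ≥0∞) (hq : Measurable q) (hq' : Measurable q')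
    (hqfin : ∀ x, q x ≠ ⊤) (hq'fin : ∀ x, q' x ≠ ⊤)
    [IsProbabilityMeasure (μ.withDensity q)] [IsProbabilityMeasure (μ.withDensity q')]
    (ψ : ℝ≥0∞ → ℝ) (hψb : ∀ x, |ψ x| ≤ 1)
    (hanti : ∀ x : ℝ≥0∞, x ≠ ⊤ → ψ x⁻¹ = -ψ x)
    (L : ℝ)
    (hlip : ∀ x : ℝ≥0∞, x ≠ ⊤ → |ψ x| ≤ L * |x.toReal - 1|) :
    ∫ x, (ψ ((ratio q q' x) ^ (1 / 2 : ℝ))) ^ 2 ∂(R)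
      ≤ (2 * L + 1) ^ 2 *
        (hellingerSq R (μ.withDensity q) + hellingerSq R (μ.withDensity q')) := by
  have hL : 0 ≤ L := by simpa using (abs_nonneg _).trans (hlip 0 ENNReal.zero_ne_top)
  set ν := R + μ
  have hRν : R ≪ ν := Measure.AbsolutelyContinuous.rfl.add_right μ
  have hμν : μ ≪ ν := Measure.AbsolutelyContinuous.rfl.add_right' R
  rw [hellingerSq_eq_integral_rnDeriv hRν ((withDensity_absolutelyContinuous μ q).trans hμν),
    hellingerSq_eq_integral_rnDeriv hRν ((withDensity_absolutelyContinuous μ q').trans hμν),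
    ← integral_rnDeriv_smul hRν]
  have hG := integrable_sqrt_rnDeriv_sub_sq R (μ.withDensity q) ν
  have hG' := integrable_sqrt_rnDeriv_sub_sq R (μ.withDensity q') ν
  calc ∫ x, (R.rnDeriv ν x).toReal • ψ (ratio q q' x ^ (1 / 2 : ℝ)) ^ 2 ∂ν
      ≤ ∫ x, (2 * L + 1) ^ 2 / 2 * ((√(R.rnDeriv ν x).toReal
          - √((μ.withDensity q).rnDeriv ν x).toReal) ^ 2 + (√(R.rnDeriv ν x).toReal
          - √((μ.withDensity q').rnDeriv ν x).toReal) ^ 2) ∂ν := by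
        refine integral_mono_of_nonneg (ae_of_all _ fun x ↦ by positivity)
          ((hG.add hG').const_mul _) ?_
        filter_upwards
          [Measure.rnDeriv_withDensity_left (μ := μ) hq.aemeasurable (ae_of_all _ hqfin),
            Measure.rnDeriv_withDensity_left (μ := μ) hq'.aemeasurable (ae_of_all _ hq'fin)]
          with x hx hx'
        rw [hx, hx', smul_eq_mul, mul_comm]
        exact sq_apply_ratio_rpow_mul_le hψb hanti hlip hL (hqfin x) (hq'fin x) _ _
    _ = _ := by
        rw [integral_const_mul, integral_add hG hG']
        ring

theorem stmt8 {α : Type*} [MeasurableSpace α] (μ : Measure α) [SigmaFinite μ]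
    (R : Measure α) [IsProbabilityMeasure R]
    (q q' : α → ℝ≥0∞) (hq : Measurable q) (hq' : Measurable q')
    (hqfin : ∀ x, q x ≠ ⊤) (hq'fin : ∀ x, q' x ≠ ⊤)
    [IsProbabilityMeasure (μ.withDensity q)] [IsProbabilityMeasure (μ.withDensity q')]
    (ψ : ℝ≥0∞ → ℝ) (hψm : Measurable ψ) (hψb : ∀ x, |ψ x| ≤ 1)
    (hanti : ∀ x : ℝ≥0∞, x ≠ ⊤ → ψ x⁻¹ = -ψ x)
    (L : ℝ) (hL : 0 < L)
    (hlip : ∀ x : ℝ≥0∞, x ≠ ⊤ → |ψ x| ≤ L * |x.toReal - 1|) :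
    ∫ x, (ψ ((ratio q q' x) ^ (1 / 2 : ℝ))) ^ 2 ∂(R)
      ≤ (2 * L + 1) ^ 2 *
        (hellingerSq R (μ.withDensity q) + hellingerSq R (μ.withDensity q')) :=
  stmt8_general μ R q q' hq hq' hqfin hq'fin ψ hψb hanti L hlip
end

section
/- The class F_k of real-valued functions on an interval X ⊆ ℝ that are piecewise constant on some partition of X into at most k intervals (the partition may depend on the function) is VC-subgraph with VC-dimension at most 2k: no set of 2k+1 points in X×ℝ is shattered by the subgraphs {(x,u) : f(x) > u}, f ∈ F_k. -/
/-!
Sort the `2k+1` points by abscissa (lexicographically, to break ties) and group them into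
the consecutive pairs `{2j, 2j+1}`, the last point left over. Cut out, from each pair, the
point with the larger ordinate. A partition into at most `k` intervals has a piece containing
three of the sorted abscissae, hence (being an interval) a whole pair; but a function constant
on that piece, with value `c`, would put the higher point of the pair below `c` and the lower
one above it.
-/

/-- `f` is piecewise constant on the set `X ⊆ ℝ` relative to some partition of
`X` into at most `k` intervals (the partition may depend on `f`). -/
def PiecewiseConstOn (X : Set ℝ) (k : ℕ) (f : ℝ → ℝ) : Prop :=
  ∃ P : Finset (Set ℝ), P.card ≤ k ∧ (∀ I ∈ P, I.OrdConnected) ∧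
    (∀ I ∈ P, ∀ J ∈ P, I ≠ J → Disjoint I J) ∧ (⋃ I ∈ P, I) = X ∧
    ∀ I ∈ P, ∃ c : ℝ, ∀ x ∈ I, f x = c

theorem Finset.exists_add_two_le_of_two_lt_card {s : Finset ℕ} (hs : 2 < s.card) :
    ∃ a ∈ s, ∃ b ∈ s, a + 2 ≤ b := by
  obtain ⟨a, ha, b, hb, c, hc, hab, hac, hbc⟩ := Finset.two_lt_card.mp hs
  by_contra! h
  have := h a ha b hb
  have := h b hb a ha
  have := h a ha c hc
  have := h c hc a ha
  have := h b hb c hc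
  have := h c hc b hb
  omega

theorem Finset.exists_monotone_injOn_mem {α : Type*} [LinearOrder α] (s : Finset α)
    (hs : s.Nonempty) :
    ∃ p : ℕ → α, Monotone p ∧ Set.InjOn p (Set.Iio s.card) ∧ ∀ i, p i ∈ s := by
  have hpos : 0 < s.card := hs.card_pos
  let e := s.orderEmbOfFin rfl
  refine ⟨fun i ↦ e ⟨min i (s.card - 1), by omega⟩, fun i j hij ↦ e.monotone ?_,
    fun i hi j hj hij ↦ ?_, fun i ↦ s.orderEmbOfFin_mem rfl _⟩
  · simp only [Fin.mk_le_mk]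
    omega
  · have := congrArg Fin.val (e.injective hij)
    simp only [Set.mem_Iio] at hi hj this
    omega

theorem Finset.exists_monotone_fst_injOn_mem {α β : Type*} [LinearOrder α] [LinearOrder β]
    (S : Finset (α × β)) (hS : S.Nonempty) :
    ∃ p : ℕ → α × β, Monotone (fun i ↦ (p i).1) ∧ Set.InjOn p (Set.Iio S.card) ∧
      ∀ i, p i ∈ S := by
  obtain ⟨q, hq, hqinj, hqS⟩ := (S.map toLex.toEmbedding).exists_monotone_injOn_mem (hS.map)
  refine ⟨fun i ↦ ofLex (q i), Prod.Lex.monotone_fst_ofLex.comp hq, ?_, fun i ↦ ?_⟩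
  · rw [Finset.card_map] at hqinj
    exact ofLex.injective.comp_injOn hqinj
  · simpa using hqS i

theorem PiecewiseConstOn.exists_eq_pair {X : Set ℝ} {k : ℕ} {f : ℝ → ℝ}
    (hf : PiecewiseConstOn X k f) {x : ℕ → ℝ} (hx : Monotone x) {n : ℕ}
    (hxX : ∀ i < n, x i ∈ X) (hn : 2 * k < n) :
    ∃ j, 2 * j + 1 < n ∧ f (x (2 * j)) = f (x (2 * j + 1)) := by
  classical
  obtain ⟨P, hPcard, hPconn, -, hPX, hPconst⟩ := hf
  have hpiece : ∀ i < n, ∃ I ∈ P, x i ∈ I := fun i hi ↦ by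
    simpa [← hPX] using hxX i hi
  choose! piece hpieceP hxpiece using hpiece
  obtain ⟨I, hI, hfiber⟩ := Finset.exists_lt_card_fiber_of_mul_lt_card_of_maps_to
    (s := Finset.range n) (n := 2) (fun i hi ↦ hpieceP i (Finset.mem_range.mp hi))
    (by rw [Finset.card_range]; omega)
  obtain ⟨a, ha, b, hb, hab⟩ := Finset.exists_add_two_le_of_two_lt_card hfiber
  simp only [Finset.mem_filter, Finset.mem_range] at ha hb
  have hxI : ∀ i, a ≤ i → i ≤ b → x i ∈ I := fun i hai hib ↦
    (hPconn I hI).out (ha.2 ▸ hxpiece a ha.1) (hb.2 ▸ hxpiece b hb.1) ⟨hx hai, hx hib⟩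
  obtain ⟨c, hc⟩ := hPconst I hI
  refine ⟨(a + 1) / 2, by omega, ?_⟩
  rw [hc _ (hxI _ (by omega) (by omega)), hc _ (hxI _ (by omega) (by omega))]

/-- From each pair of indices `{2j, 2j+1}`, the one carrying the larger value of `u`, the even
one in case of a tie. -/
def upperOfPairs (u : ℕ → ℝ) : Set ℕ :=
  {i | if Even i then u (i + 1) ≤ u i else u (i - 1) < u i}

theorem not_upperOfPairs_iff_lt_pair (u : ℕ → ℝ) (j : ℕ) (c : ℝ) :
    ¬ ((2 * j ∈ upperOfPairs u ↔ u (2 * j) < c) ∧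
      (2 * j + 1 ∈ upperOfPairs u ↔ u (2 * j + 1) < c)) := by
  simp only [upperOfPairs, Set.mem_ofPred_eq, even_two_mul, Nat.even_add_one, not_true,
    if_true, if_false, Nat.add_sub_cancel]
  rintro ⟨h₀, h₁⟩
  rcases le_or_gt (u (2 * j + 1)) (u (2 * j)) with h | h
  · have := h₀.mp h
    have := h₁.not.mp h.not_gt
    linarith
  · have := h₁.mp h
    have := h₀.not.mp h.not_ge
    linarith

theorem stmt14_general (k : ℕ) (X : Set ℝ) :
    ¬ ∃ S : Finset (ℝ × ℝ), S.card = 2 * k + 1 ∧ (∀ p ∈ S, p.1 ∈ X) ∧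
      ∀ T ⊆ S, ∃ f : ℝ → ℝ, PiecewiseConstOn X k f ∧
        {p : ℝ × ℝ | p ∈ S ∧ p.2 < f p.1} = (↑T : Set (ℝ × ℝ)) := by
  classical
  rintro ⟨S, hcard, hSX, hshat⟩
  obtain ⟨p, hmono, hinj, hpS⟩ := S.exists_monotone_fst_injOn_mem (Finset.card_pos.mp (by omega))
  set U := upperOfPairs fun i ↦ (p i).2
  obtain ⟨f, hf, hfT⟩ :=
    hshat (((Finset.range S.card).filter (· ∈ U)).image p) (fun _ h ↦ by
      obtain ⟨i, -, rfl⟩ := Finset.mem_image.mp h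
      exact hpS i)
  have hcut : ∀ i < S.card, i ∈ U ↔ (p i).2 < f (p i).1 := fun i hi ↦ by
    have := Set.ext_iff.mp hfT (p i)
    simp only [Set.mem_ofPred_eq, hpS, true_and, Finset.coe_image, Finset.coe_filter] at this
    rw [this, hinj.mem_image_iff (fun j hj ↦ Finset.mem_range.mp hj.1) hi]
    simp [hi]
  obtain ⟨j, hj, hfj⟩ := hf.exists_eq_pair (n := S.card) hmono (fun i _ ↦ hSX _ (hpS i)) (by omega)
  exact not_upperOfPairs_iff_lt_pair _ j _ ⟨hcut _ (by omega), hfj ▸ hcut _ hj⟩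

/-- The class of piecewise constant functions with at most `k` pieces is
VC-subgraph with dimension at most `2k`: no set of `2k+1` points of `X × ℝ` is
shattered by the subgraphs `{(x,u) : f x > u}`. -/
theorem stmt14 (k : ℕ) (hk : 0 < k) (X : Set ℝ) :
    ¬ ∃ S : Finset (ℝ × ℝ), S.card = 2 * k + 1 ∧ (∀ p ∈ S, p.1 ∈ X) ∧
      ∀ T ⊆ S, ∃ f : ℝ → ℝ, PiecewiseConstOn X k f ∧
        {p : ℝ × ℝ | p ∈ S ∧ p.2 < f p.1} = (↑T : Set (ℝ × ℝ)) :=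
  stmt14_general k X
end

section
/- Let C ⊂ ℝ^N be a nonempty compact convex set and t : C×C → ℝ a continuous function such that β ↦ t(α,β) is strictly concave for each α and t(α,β) = −t(β,α) for all α, β. Then t has a unique saddle point, which lies on the diagonal: there exists a unique α* ∈ C with t(α*,β) ≤ t(α*,α*) = 0 ≤ t(α,α*) for all α, β ∈ C. -/
/-!
By antisymmetry, `α ↦ t(α, β) = -t(β, α)` is convex, so Sion's minimax theorem gives a saddle
point `(a, b)`; then `t(a, β) ≤ t(b, b) = 0` for all `β`. For uniqueness, strict concavity lets
`t(α', ·)` attain its maximum at only one point: at a saddle point `(α', β')` both `β'` and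
`α'` are maximizers, so `α' = β'`, and the same argument applied to `t(α*, ·)`, which is
maximized at `α*` and at `α'`, gives `α' = α*`.
-/

open Set

theorem exists_forall_le_zero_of_antisymm {E : Type*} [TopologicalSpace E] [AddCommGroup E]
    [Module ℝ E] [IsTopologicalAddGroup E] [ContinuousSMul ℝ E] {C : Set E} {t : E → E → ℝ}
    (hne : C.Nonempty) (hcomp : IsCompact C) (hconv : Convex ℝ C)
    (hcont : ∀ a ∈ C, ContinuousOn (t a) C) (hconc : ∀ a ∈ C, ConcaveOn ℝ C (t a))
    (hanti : ∀ a ∈ C, ∀ b ∈ C, t a b = -t b a) :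
    ∃ a ∈ C, ∀ b ∈ C, t a b ≤ 0 := by
  have hleft : ∀ b ∈ C, EqOn (t · b) (fun a => -t b a) C := fun b hb a ha => hanti a ha b hb
  obtain ⟨a, ha, b, hb, hsaddle⟩ := Sion.exists_isSaddlePointOn hne hconv hcomp
    (fun b hb => ((hcont b hb).neg.congr (hleft b hb)).lowerSemicontinuousOn)
    (fun b hb => ((hconc b hb).neg.congr (hleft b hb).symm).quasiconvexOn)
    hconv hne hcomp (fun a ha => (hcont a ha).upperSemicontinuousOn)
    (fun a ha => (hconc a ha).quasiconcaveOn)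
  exact ⟨a, ha, fun y hy => by linarith [hsaddle b hb y hy, hanti b hb b hb]⟩

theorem stmt17 (N : ℕ) (C : Set (Fin N → ℝ)) (hne : C.Nonempty)
    (hcomp : IsCompact C) (hconv : Convex ℝ C)
    (t : (Fin N → ℝ) → (Fin N → ℝ) → ℝ)
    (hcont : Continuous fun p : (Fin N → ℝ) × (Fin N → ℝ) => t p.1 p.2)
    (hconc : ∀ a ∈ C, StrictConcaveOn ℝ C (t a))
    (hanti : ∀ a ∈ C, ∀ b ∈ C, t a b = -t b a) :
    ∃ astar ∈ C, (∀ b ∈ C, t astar b ≤ 0) ∧ t astar astar = 0 ∧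
      (∀ a ∈ C, 0 ≤ t a astar) ∧
      ∀ a' b' : Fin N → ℝ, a' ∈ C → b' ∈ C →
        (∀ b ∈ C, t a' b ≤ t a' b') → (∀ a ∈ C, t a' b' ≤ t a b') →
        a' = astar ∧ b' = astar := by
  have hself : ∀ a ∈ C, t a a = 0 := fun a ha => by linarith [hanti a ha a ha]
  have eq_of_nonneg : ∀ a ∈ C, ∀ a' ∈ C, (∀ b ∈ C, t a b ≤ 0) → 0 ≤ t a a' → a' = a :=
    fun a ha a' ha' hle h0 => (hconc a ha).eq_of_isMaxOn (fun b hb => (hle b hb).trans h0)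
      (fun b hb => (hle b hb).trans (hself a ha).ge) ha' ha
  obtain ⟨astar, hastar, hle⟩ := exists_forall_le_zero_of_antisymm (t := t) hne hcomp hconv
    (fun a _ => (hcont.comp (Continuous.prodMk_right a)).continuousOn)
    (fun a ha => (hconc a ha).concaveOn) hanti
  refine ⟨astar, hastar, hle, hself astar hastar,
    fun a ha => by linarith [hanti a ha astar hastar, hle a ha], ?_⟩
  intro a' b' ha' hb' hmax hmin
  have hval : t a' b' ≤ 0 := (hmin b' hb').trans (hself b' hb').le
  obtain rfl : b' = a' := eq_of_nonneg a' ha' b' hb' (fun b hb => (hmax b hb).trans hval)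
    (by linarith [hmax a' ha', hself a' ha'])
  obtain rfl : b' = astar := eq_of_nonneg astar hastar b' hb' hle
    (by linarith [hanti b' hb' astar hastar, hmax astar hastar])
  exact ⟨rfl, rfl⟩
end
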